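/- Let V be a real vector space and Z ⊆ V a convex subset. Let D : Z × Z → [0,1] be a metric-like loss with constant C ≥ 1 such that for every z ∈ Z the map w ↦ D(w, z) is convex on Z. Let X be a set, F a nonempty finite set of functions X → Z, and let T ≥ 1, N ≥ 1 be integers and β ≥ 0 a real. Then there exists a family of maps A_1,…,A_T, where A_t assigns to each pair consisting of a covariate sequence (x^(1),…,x^(t−1)) in X and an estimator sequence (f̂^(1),…,f̂^(t)) of functions X → Z a finitely supported probability distribution μ^(t) over functions X → Z, such that: for every f* ∈ F and every sequences x^(1),…,x^(T) ∈ X and f̂^(1),…,f̂^(T) : X → Z satisfying the offline estimation guarantee with parameter β relative to f* (for every t, ∑_{s=1}^{t−1} D(f̂^(t)(x^(s)), f*(x^(s))) ≤ β), the resulting predictions satisfy ∑_{t=1}^{T} E_{f ∼ μ^(t)}[ D(f(x^(t)), f*(x^(t))) ] ≤ 3C·(N + βT/N) + 2C·N·log|F|, where log denotes the natural logarithm. -/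

import Mathlib

/-!
Run exponential weights with learning rate `1/N` over blocks of `N` rounds, updating only at
block ends, and score every point of a finished block against the estimator produced right
after that block closed. By the offline guarantee these delayed estimators are `β`-close to
`f*` on each finished block, and the last block costs at most `N`, so their total error
against `f*` is at most `N + βT/N`. The relaxed triangle inequality through the delayed
estimator bounds the online error by `C` times the hedge loss plus `C` times that error, and
the potential argument for `log ∑ exp (-η L)` bounds the hedge loss by twice the error plus
`2N log |F|`.
-/

open Finset Real

lemma Real.exp_neg_le_one_sub_half {y : ℝ} (hy₀ : 0 ≤ y) (hy₁ : y ≤ 1) :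
    exp (-y) ≤ 1 - y / 2 := by
  have hconv := convexOn_exp.2 (Set.mem_univ 0) (Set.mem_univ (-1)) (sub_nonneg.2 hy₁) hy₀
    (sub_add_cancel 1 y)
  have he : 2 ≤ exp 1 := by linarith [add_one_le_exp 1]
  have he' : exp (-1) ≤ 1 / 2 := by
    rw [exp_neg, ← one_div]; exact one_div_le_one_div_of_le two_pos he
  simp only [smul_eq_mul, mul_zero, zero_add, mul_neg, mul_one, exp_zero] at hconv
  nlinarith

section Gibbs

variable {α : Type*} (F : Finset α) (η : ℝ) (L : α → ℝ)

noncomputable def gibbs (f : α) : ℝ :=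
  exp (-η * L f) / ∑ g ∈ F, exp (-η * L g)

lemma gibbs_nonneg (f : α) : 0 ≤ gibbs F η L f := by
  unfold gibbs; positivity

lemma sum_gibbs (hF : F.Nonempty) : ∑ f ∈ F, gibbs F η L f = 1 := by
  simp only [gibbs]
  rw [← sum_div]
  exact div_self (sum_pos (fun _ _ => exp_pos _) hF).ne'

lemma log_sum_exp_add_le {ℓ : α → ℝ} (hF : F.Nonempty) (hℓ₀ : ∀ f ∈ F, 0 ≤ η * ℓ f)
    (hℓ₁ : ∀ f ∈ F, η * ℓ f ≤ 1) :
    log (∑ f ∈ F, exp (-η * (L f + ℓ f)))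
      ≤ log (∑ f ∈ F, exp (-η * L f)) - η / 2 * ∑ f ∈ F, gibbs F η L f * ℓ f := by
  set W := ∑ f ∈ F, exp (-η * L f)
  have hW : 0 < W := sum_pos (fun _ _ => exp_pos _) hF
  set a := ∑ f ∈ F, gibbs F η L f * ℓ f
  have ha : W * a = ∑ f ∈ F, exp (-η * L f) * ℓ f := by
    rw [mul_sum]
    exact sum_congr rfl fun f _ => by rw [gibbs, ← mul_assoc, mul_div_cancel₀ _ hW.ne']
  have hstep : ∑ f ∈ F, exp (-η * (L f + ℓ f)) ≤ W * exp (-(η / 2 * a)) :=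
    calc ∑ f ∈ F, exp (-η * (L f + ℓ f))
        ≤ ∑ f ∈ F, exp (-η * L f) * (1 - η * ℓ f / 2) := by
          refine sum_le_sum fun f hf => ?_
          rw [mul_add, exp_add, neg_mul η (ℓ f)]
          exact mul_le_mul_of_nonneg_left (exp_neg_le_one_sub_half (hℓ₀ f hf) (hℓ₁ f hf))
            (exp_pos _).le
      _ = W * (1 - η / 2 * a) := by
          rw [mul_sub, mul_one, mul_left_comm, ha, mul_sum, ← sum_sub_distrib]
          exact sum_congr rfl fun f _ => by ring
      _ ≤ W * exp (-(η / 2 * a)) := by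
          gcongr; linarith [add_one_le_exp (-(η / 2 * a))]
  have hpos : 0 < ∑ f ∈ F, exp (-η * (L f + ℓ f)) := sum_pos (fun _ _ => exp_pos _) hF
  calc log (∑ f ∈ F, exp (-η * (L f + ℓ f))) ≤ log (W * exp (-(η / 2 * a))) :=
        log_le_log hpos hstep
    _ = log W - η / 2 * a := by rw [log_mul hW.ne' (exp_pos _).ne', log_exp]; ring

end Gibbs

lemma hedge_regret {α : Type*} {F : Finset α} {fstar : α} (hfstar : fstar ∈ F) {η : ℝ}
    (hη : 0 < η) (ℓ : ℕ → α → ℝ) (hℓ₀ : ∀ j, ∀ f ∈ F, 0 ≤ ℓ j f)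
    (hℓ₁ : ∀ j, ∀ f ∈ F, η * ℓ j f ≤ 1) (K : ℕ) :
    ∑ j ∈ range K, ∑ f ∈ F, gibbs F η (fun f => ∑ i ∈ range j, ℓ i f) f * ℓ j f
      ≤ 2 * ∑ j ∈ range K, ℓ j fstar + 2 / η * log #F := by
  have hF : F.Nonempty := ⟨fstar, hfstar⟩
  set Φ : ℕ → ℝ := fun j => log (∑ f ∈ F, exp (-η * ∑ i ∈ range j, ℓ i f))
  have hstep : ∀ j, η / 2 * ∑ f ∈ F, gibbs F η (fun f => ∑ i ∈ range j, ℓ i f) f * ℓ j f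
      ≤ Φ j - Φ (j + 1) := by
    intro j
    have hdecay := log_sum_exp_add_le F η (fun f => ∑ i ∈ range j, ℓ i f) hF
      (fun f hf => mul_nonneg hη.le (hℓ₀ j f hf)) (hℓ₁ j)
    simp only [Φ, sum_range_succ]
    linarith
  have hΦ₀ : Φ 0 = log #F := by simp [Φ]
  have hΦK : -η * ∑ j ∈ range K, ℓ j fstar ≤ Φ K := by
    rw [← log_exp (-η * _)]
    exact log_le_log (exp_pos _)
      (single_le_sum (f := fun f => exp (-η * ∑ i ∈ range K, ℓ i f))
        (fun _ _ => (exp_pos _).le) hfstar)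
  have htel : η / 2 * ∑ j ∈ range K, ∑ f ∈ F,
      gibbs F η (fun f => ∑ i ∈ range j, ℓ i f) f * ℓ j f ≤ Φ 0 - Φ K := by
    rw [mul_sum, ← neg_sub, ← sum_range_sub, ← sum_neg_distrib]
    exact sum_le_sum fun j _ => by linarith [hstep j]
  rw [hΦ₀] at htel
  refine le_of_mul_le_mul_left ?_ (half_pos hη)
  calc η / 2 * _ ≤ log #F + η * ∑ j ∈ range K, ℓ j fstar := by linarith
    _ = η / 2 * (2 * ∑ j ∈ range K, ℓ j fstar + 2 / η * log #F) := by field_simp; ring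

section Blocks

variable {M : Type*} [AddCommMonoid M] (N T : ℕ)

def blockSum (ℓ : ℕ → M) (j : ℕ) : M :=
  ∑ u ∈ range T with u / N = j, ℓ u

lemma sum_range_eq_sum_blockSum (ℓ : ℕ → M) :
    ∑ u ∈ range T, ℓ u = ∑ j ∈ range ((T - 1) / N + 1), blockSum N T ℓ j := by
  refine (sum_fiberwise_of_maps_to (fun u hu => ?_) ℓ).symm
  rw [mem_range] at hu ⊢
  exact Nat.lt_succ_of_le (Nat.div_le_div_right (by omega))

lemma sum_range_filter_div_lt {u : ℕ} (hu : u < T) (ℓ : ℕ → M) :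
    ∑ s ∈ range u with s / N < u / N, ℓ s = ∑ j ∈ range (u / N), blockSum N T ℓ j := by
  rw [← sum_fiberwise_of_maps_to (g := (· / N)) (t := range (u / N))
    (fun s hs => mem_range.2 (mem_filter.1 hs).2)]
  refine sum_congr rfl fun j hj => sum_congr (ext fun s => ?_) fun _ _ => rfl
  have hj : j < u / N := mem_range.1 hj
  simp only [mem_filter, mem_range]
  constructor
  · rintro ⟨⟨hs, -⟩, rfl⟩; exact ⟨hs.trans hu, rfl⟩
  · rintro ⟨-, rfl⟩
    refine ⟨⟨lt_of_not_ge fun h => ?_, hj⟩, rfl⟩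
    exact (Nat.div_le_div_right (c := N) h).not_gt hj

lemma card_filter_div_eq_le {N : ℕ} (hN : 0 < N) (j : ℕ) : #{u ∈ range T | u / N = j} ≤ N := by
  calc #{u ∈ range T | u / N = j} ≤ #(Ico (j * N) (j * N + N)) := by
        refine card_le_card fun u hu => ?_
        have hbounds := (Nat.div_eq_iff hN).1 (mem_filter.1 hu).2
        rw [mem_Ico]; omega
    _ = N := by simp

lemma blockSum_le {N : ℕ} (hN : 0 < N) {ℓ : ℕ → ℝ} (hℓ : ∀ u, ℓ u ≤ 1) (j : ℕ) :
    blockSum N T ℓ j ≤ N :=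
  calc blockSum N T ℓ j ≤ #{u ∈ range T | u / N = j} • (1 : ℝ) :=
        sum_le_card_nsmul _ _ _ fun u _ => hℓ u
    _ ≤ N := by simpa using card_filter_div_eq_le T hN j

end Blocks

lemma blocked_hedge_regret {α : Type*} {F : Finset α} {fstar : α} (hfstar : fstar ∈ F)
    {N : ℕ} (hN : 0 < N) (T : ℕ) (ℓ : ℕ → α → ℝ) (hℓ₀ : ∀ u, ∀ f ∈ F, 0 ≤ ℓ u f)
    (hℓ₁ : ∀ u, ∀ f ∈ F, ℓ u f ≤ 1) :
    ∑ u ∈ range T, ∑ f ∈ F,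
        gibbs F (1 / N) (fun f => ∑ j ∈ range (u / N), blockSum N T (ℓ · f) j) f * ℓ u f
      ≤ 2 * ∑ u ∈ range T, ℓ u fstar + 2 * N * log #F := by
  have hregroup : ∑ u ∈ range T, ∑ f ∈ F,
        gibbs F (1 / N) (fun f => ∑ j ∈ range (u / N), blockSum N T (ℓ · f) j) f * ℓ u f
      = ∑ j ∈ range ((T - 1) / N + 1), ∑ f ∈ F,
        gibbs F (1 / N) (fun f => ∑ i ∈ range j, blockSum N T (ℓ · f) i) f
          * blockSum N T (ℓ · f) j := by
    rw [sum_range_eq_sum_blockSum N T]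
    refine sum_congr rfl fun j _ => ?_
    simp only [blockSum, mul_sum]
    rw [sum_comm]
    exact sum_congr rfl fun f _ => sum_congr rfl fun u hu => by rw [(mem_filter.1 hu).2]
  have hN' : (0 : ℝ) < N := Nat.cast_pos.2 hN
  have hB₁ : ∀ j, ∀ f ∈ F, 1 / (N : ℝ) * blockSum N T (ℓ · f) j ≤ 1 := fun j f hf => by
    rw [div_mul_eq_mul_div, one_mul, div_le_one hN']
    exact blockSum_le T hN (hℓ₁ · f hf) j
  have hregret := hedge_regret hfstar (one_div_pos.2 hN') (fun j f => blockSum N T (ℓ · f) j)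
    (fun j f hf => sum_nonneg fun u _ => hℓ₀ u f hf) hB₁ ((T - 1) / N + 1)
  rw [hregroup, sum_range_eq_sum_blockSum N T (ℓ · fstar)]
  rwa [div_div_eq_mul_div, div_one] at hregret

lemma sum_delayed_error_le {N T : ℕ} (hN : 0 < N) {β : ℝ} (hβ : 0 ≤ β) (e : ℕ → ℕ → ℝ)
    (he₀ : ∀ r s, 0 ≤ e r s) (he₁ : ∀ r s, e r s ≤ 1)
    (hoff : ∀ r < T, ∑ s ∈ range r, e r s ≤ β) :
    ∑ u ∈ range T, e (min ((u / N + 1) * N) (T - 1)) u ≤ N + β * T / N := by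
  -- each finished block is covered by one offline guarantee; the last block costs at most `N`
  have hfull : ∀ j ∈ range ((T - 1) / N),
      blockSum N T (fun u => e (min ((u / N + 1) * N) (T - 1)) u) j ≤ β := by
    intro j hj
    have hjT : (j + 1) * N ≤ T - 1 :=
      (Nat.mul_le_mul_right N (mem_range.1 hj)).trans (Nat.div_mul_le_self _ _)
    calc blockSum N T (fun u => e (min ((u / N + 1) * N) (T - 1)) u) j
        = ∑ u ∈ range T with u / N = j, e ((j + 1) * N) u :=
          sum_congr rfl fun u hu => by dsimp only; rw [(mem_filter.1 hu).2, min_eq_left hjT]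
      _ ≤ ∑ s ∈ range ((j + 1) * N), e ((j + 1) * N) s := by
          refine sum_le_sum_of_subset_of_nonneg (fun u hu => ?_) fun _ _ _ => he₀ _ _
          rw [mem_range, ← Nat.div_lt_iff_lt_mul hN, (mem_filter.1 hu).2]
          exact j.lt_succ_self
      _ ≤ β := hoff _ (by have := Nat.le_mul_of_pos_left N (n := j + 1) (by omega); omega)
  have hblocks : (((T - 1) / N : ℕ) : ℝ) ≤ T / N :=
    Nat.cast_div_le.trans <|
      div_le_div_of_nonneg_right (by exact_mod_cast T.sub_le 1) (by positivity)
  rw [sum_range_eq_sum_blockSum N T, sum_range_succ]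
  calc _ ≤ (((T - 1) / N : ℕ) : ℝ) * β + N := by
        refine add_le_add ?_ (blockSum_le T hN (he₁ _ ·) _)
        simpa using sum_le_card_nsmul _ _ _ hfull
    _ ≤ T / N * β + N := by gcongr
    _ = N + β * T / N := by ring

lemma sum_mul_le_of_le_mul_add {α : Type*} {F : Finset α} {p a b : α → ℝ} {C c : ℝ}
    (hp₀ : ∀ f ∈ F, 0 ≤ p f) (hp₁ : ∑ f ∈ F, p f = 1) (hab : ∀ f ∈ F, a f ≤ C * (b f + c)) :
    ∑ f ∈ F, p f * a f ≤ C * ∑ f ∈ F, p f * b f + C * c :=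
  calc ∑ f ∈ F, p f * a f ≤ ∑ f ∈ F, p f * (C * (b f + c)) :=
        sum_le_sum fun f hf => mul_le_mul_of_nonneg_left (hab f hf) (hp₀ f hf)
    _ = C * ∑ f ∈ F, p f * b f + C * c * ∑ f ∈ F, p f := by
        rw [mul_sum, mul_sum, ← sum_add_distrib]
        exact sum_congr rfl fun f _ => by ring
    _ = C * ∑ f ∈ F, p f * b f + C * c := by rw [hp₁, mul_one]

lemma delayed_hedge_error_le {V X : Type*} {Z : Set V} {D : V → V → ℝ} {C : ℝ} (hC : 0 ≤ C)
    (hD0 : ∀ z₁ ∈ Z, ∀ z₂ ∈ Z, 0 ≤ D z₁ z₂)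
    (hD1 : ∀ z₁ ∈ Z, ∀ z₂ ∈ Z, D z₁ z₂ ≤ 1)
    (hDsymm : ∀ z₁ ∈ Z, ∀ z₂ ∈ Z, D z₁ z₂ = D z₂ z₁)
    (hDtri : ∀ z₁ ∈ Z, ∀ z₂ ∈ Z, ∀ z₃ ∈ Z, D z₁ z₂ ≤ C * (D z₁ z₃ + D z₃ z₂))
    {F : Finset (X → V)} (hFZ : ∀ f ∈ F, ∀ x, f x ∈ Z) {fstar : X → V} (hfstar : fstar ∈ F)
    {N T : ℕ} (hN : 0 < N) {β : ℝ} (hβ : 0 ≤ β) (y : ℕ → X) (g : ℕ → X → V)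
    (hgZ : ∀ r x, g r x ∈ Z)
    (hoff : ∀ r < T, ∑ s ∈ range r, D (g r (y s)) (fstar (y s)) ≤ β) :
    ∑ u ∈ range T, ∑ f ∈ F,
        gibbs F (1 / N) (fun f => ∑ s ∈ range u with s / N < u / N,
          D (f (y s)) (g (min ((s / N + 1) * N) u) (y s))) f * D (f (y u)) (fstar (y u))
      ≤ 3 * C * (N + β * T / N) + 2 * C * N * log #F := by
  set ref : ℕ → ℕ := fun u => min ((u / N + 1) * N) (T - 1)
  set ℓ : ℕ → (X → V) → ℝ := fun u f => D (f (y u)) (g (ref u) (y u))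
  set E := ∑ u ∈ range T, D (g (ref u) (y u)) (fstar (y u))
  have hloss : ∀ u ∈ range T, (fun f => ∑ s ∈ range u with s / N < u / N,
      D (f (y s)) (g (min ((s / N + 1) * N) u) (y s)))
        = fun f => ∑ j ∈ range (u / N), blockSum N T (ℓ · f) j := by
    intro u hu
    funext f
    rw [← sum_range_filter_div_lt N T (mem_range.1 hu)]
    refine sum_congr rfl fun s hs => ?_
    have hs : (s / N + 1) * N ≤ u := (Nat.mul_le_mul_right N (mem_filter.1 hs).2).trans
      (Nat.div_mul_le_self u N)
    have hu : u ≤ T - 1 := Nat.le_sub_one_of_lt (mem_range.1 hu)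
    simp only [ℓ, ref, min_eq_left hs, min_eq_left (hs.trans hu)]
  have hregret := blocked_hedge_regret hfstar hN T ℓ
    (fun u f hf => hD0 _ (hFZ f hf _) _ (hgZ _ _)) (fun u f hf => hD1 _ (hFZ f hf _) _ (hgZ _ _))
  have hcomparator : ∑ u ∈ range T, ℓ u fstar = E :=
    sum_congr rfl fun u _ => hDsymm _ (hFZ _ hfstar _) _ (hgZ _ _)
  have herror : E ≤ N + β * T / N :=
    sum_delayed_error_le hN hβ (fun r s => D (g r (y s)) (fstar (y s)))
      (fun _ _ => hD0 _ (hgZ _ _) _ (hFZ _ hfstar _))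
      (fun _ _ => hD1 _ (hgZ _ _) _ (hFZ _ hfstar _)) hoff
  calc _ ≤ ∑ u ∈ range T, (C * ∑ f ∈ F,
          gibbs F (1 / N) (fun f => ∑ j ∈ range (u / N), blockSum N T (ℓ · f) j) f * ℓ u f
        + C * D (g (ref u) (y u)) (fstar (y u))) := by
        refine sum_le_sum fun u hu => ?_
        rw [hloss u hu]
        exact sum_mul_le_of_le_mul_add (fun f _ => gibbs_nonneg _ _ _ f)
          (sum_gibbs _ _ _ ⟨fstar, hfstar⟩)
          fun f hf => hDtri _ (hFZ f hf _) _ (hFZ _ hfstar _) _ (hgZ _ _)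
    _ ≤ C * (2 * E + 2 * N * log #F) + C * E := by
        rw [hcomparator] at hregret
        rw [sum_add_distrib, ← mul_sum, ← mul_sum]
        exact add_le_add_left (mul_le_mul_of_nonneg_left hregret hC) _
    _ ≤ 3 * C * (N + β * T / N) + 2 * C * N * log #F := by nlinarith

open Classical in
noncomputable def gibbsFinsupp {α : Type*} (F : Finset α) (η : ℝ) (L : α → ℝ) : α →₀ ℝ :=
  Finsupp.indicator F fun f _ => gibbs F η L f

lemma gibbsFinsupp_sum_mul {α : Type*} (F : Finset α) (η : ℝ) (L r : α → ℝ) :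
    (gibbsFinsupp F η L).sum (fun g p => p * r g) = ∑ f ∈ F, gibbs F η L f * r f :=
  Finsupp.sum_indicator_index _ fun _ _ => zero_mul _

lemma gibbsFinsupp_nonneg {α : Type*} (F : Finset α) (η : ℝ) (L : α → ℝ) (f : α) :
    0 ≤ gibbsFinsupp F η L f := by
  classical
  rw [gibbsFinsupp, Finsupp.indicator_apply]
  split_ifs
  exacts [gibbs_nonneg F η L f, le_rfl]

/-- `c s` is the covariate of round `s + 1` and `e r` the estimator of round `r + 1`. A covariate
counts once its block `s / N` is finished, and is scored against the first estimator of the next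
block, whose offline guarantee covers the whole block; the `min` only keeps that index in range
and is inactive on finished blocks. -/
noncomputable def delayedLoss {V X : Type*} (D : V → V → ℝ) (N t : ℕ) (c : Fin (t - 1) → X)
    (e : Fin t → X → V) (f : X → V) : ℝ :=
  ∑ s : Fin (t - 1) with s.val / N < (t - 1) / N,
    D (f (c s)) (e ⟨min ((s / N + 1) * N) (t - 1), by have := s.isLt; omega⟩ (c s))

lemma delayedLoss_apply {V X : Type*} (D : V → V → ℝ) (N t : ℕ) (x : ℕ → X)
    (fhat : ℕ → X → V) :
    delayedLoss D N t (fun s => x (s + 1)) (fun s => fhat (s + 1))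
      = fun f => ∑ s ∈ range (t - 1) with s / N < (t - 1) / N,
          D (f (x (s + 1))) (fhat (min ((s / N + 1) * N) (t - 1) + 1) (x (s + 1))) := by
  funext f
  rw [delayedLoss, sum_filter, sum_filter]
  exact Fin.sum_univ_eq_sum_range (fun s => if s / N < (t - 1) / N then
    D (f (x (s + 1))) (fhat (min ((s / N + 1) * N) (t - 1) + 1) (x (s + 1))) else 0) _

lemma sum_Icc_one_eq_sum_range {M : Type*} [AddCommMonoid M] (n : ℕ) (h : ℕ → M) :
    ∑ t ∈ Icc 1 n, h t = ∑ u ∈ range n, h (u + 1) := by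
  rw [range_eq_Ico, sum_Ico_add', ← Ico_add_one_right_eq_Icc]

theorem oracle_efficient_via_delayed_ol_general {V : Type*} [AddCommGroup V] [Module ℝ V]
    (Z : Set V)
    (D : V → V → ℝ) (C : ℝ) (hC : 1 ≤ C)
    (hD0 : ∀ z₁ ∈ Z, ∀ z₂ ∈ Z, 0 ≤ D z₁ z₂)
    (hD1 : ∀ z₁ ∈ Z, ∀ z₂ ∈ Z, D z₁ z₂ ≤ 1)
    (hDsymm : ∀ z₁ ∈ Z, ∀ z₂ ∈ Z, D z₁ z₂ = D z₂ z₁)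
    (hDtri : ∀ z₁ ∈ Z, ∀ z₂ ∈ Z, ∀ z₃ ∈ Z, D z₁ z₂ ≤ C * (D z₁ z₃ + D z₃ z₂))
    {X : Type*} (F : Finset (X → V)) (hF : F.Nonempty)
    (hFZ : ∀ f ∈ F, ∀ xx, f xx ∈ Z)
    (T N : ℕ) (hN : 1 ≤ N) (β : ℝ) (hβ : 0 ≤ β) :
    ∃ A : (t : ℕ) → (Fin (t - 1) → X) → (Fin t → (X → V)) → ((X → V) →₀ ℝ),
      (∀ t c e, (∀ g, 0 ≤ A t c e g) ∧ ((A t c e).sum fun _ p => p) = 1 ∧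
        ∀ g ∈ (A t c e).support, ∀ xx, g xx ∈ Z) ∧
      ∀ fstar ∈ F, ∀ (x : ℕ → X) (fhat : ℕ → X → V),
        (∀ t xx, fhat t xx ∈ Z) →
        (∀ t ∈ Finset.Icc 1 T,
          ∑ s ∈ Finset.Icc 1 (t - 1), D (fhat t (x s)) (fstar (x s)) ≤ β) →
        ∑ t ∈ Finset.Icc 1 T,
          ((A t (fun s => x (s.val + 1)) (fun s => fhat (s.val + 1))).sum
            fun g p => p * D (g (x t)) (fstar (x t)))
          ≤ 3 * C * ((N : ℝ) + β * T / N) + 2 * C * N * Real.log (F.card) := by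
  refine ⟨fun t c e => gibbsFinsupp F (1 / N) (delayedLoss D N t c e), fun t c e =>
    ⟨gibbsFinsupp_nonneg _ _ _, ?_, fun g hg => hFZ g (Finsupp.support_indicator_subset _ _ hg)⟩,
    ?_⟩
  · have hmass := gibbsFinsupp_sum_mul F (1 / N) (delayedLoss D N t c e) 1
    simp only [Pi.one_apply, mul_one] at hmass
    rw [hmass, sum_gibbs _ _ _ hF]
  intro fstar hfstar x fhat hfhatZ hoff
  rw [sum_Icc_one_eq_sum_range]
  simp only [gibbsFinsupp_sum_mul, delayedLoss_apply, Nat.add_sub_cancel]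
  refine delayed_hedge_error_le (by linarith) hD0 hD1 hDsymm hDtri hFZ hfstar hN hβ
    (fun s => x (s + 1)) (fun r => fhat (r + 1)) (fun _ _ => hfhatZ _ _) fun r hr => ?_
  have hoff_r := hoff (r + 1) (mem_Icc.2 ⟨Nat.le_add_left 1 r, hr⟩)
  rwa [Nat.add_sub_cancel, sum_Icc_one_eq_sum_range] at hoff_r

/-- Oracle-efficient online estimation for finite classes via delayed online
learning: for a convex `Z`, a metric-like loss `D` with constant `C` that is convex in its
first argument, a finite class `F` of functions into `Z`, a horizon `T`, a delay `N`, and an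
offline estimation parameter `β`, there is a family of maps `A t` (taking the past covariates
`x^(1),…,x^(t−1)` and the estimators `f̂^(1),…,f̂^(t)`, and not depending on the target) that
produce finitely supported probability distributions over functions `X → Z` such that for
every target `f* ∈ F` and every data satisfying the offline guarantee with parameter `β`, the
online estimation error is at most `3C(N + βT/N) + 2CN log|F|`. -/
theorem oracle_efficient_via_delayed_ol {V : Type*} [AddCommGroup V] [Module ℝ V]
    (Z : Set V) (hZconv : Convex ℝ Z)
    (D : V → V → ℝ) (C : ℝ) (hC : 1 ≤ C)
    (hD0 : ∀ z₁ ∈ Z, ∀ z₂ ∈ Z, 0 ≤ D z₁ z₂)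
    (hD1 : ∀ z₁ ∈ Z, ∀ z₂ ∈ Z, D z₁ z₂ ≤ 1)
    (hDsymm : ∀ z₁ ∈ Z, ∀ z₂ ∈ Z, D z₁ z₂ = D z₂ z₁)
    (hDdiag : ∀ z ∈ Z, D z z = 0)
    (hDtri : ∀ z₁ ∈ Z, ∀ z₂ ∈ Z, ∀ z₃ ∈ Z, D z₁ z₂ ≤ C * (D z₁ z₃ + D z₃ z₂))
    (hDconv : ∀ z ∈ Z, ConvexOn ℝ Z (fun w => D w z))
    {X : Type*} (F : Finset (X → V)) (hF : F.Nonempty)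
    (hFZ : ∀ f ∈ F, ∀ xx, f xx ∈ Z)
    (T N : ℕ) (hT : 1 ≤ T) (hN : 1 ≤ N) (β : ℝ) (hβ : 0 ≤ β) :
    ∃ A : (t : ℕ) → (Fin (t - 1) → X) → (Fin t → (X → V)) → ((X → V) →₀ ℝ),
      (∀ t c e, (∀ g, 0 ≤ A t c e g) ∧ ((A t c e).sum fun _ p => p) = 1 ∧
        ∀ g ∈ (A t c e).support, ∀ xx, g xx ∈ Z) ∧
      ∀ fstar ∈ F, ∀ (x : ℕ → X) (fhat : ℕ → X → V),
        (∀ t xx, fhat t xx ∈ Z) →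
        (∀ t ∈ Finset.Icc 1 T,
          ∑ s ∈ Finset.Icc 1 (t - 1), D (fhat t (x s)) (fstar (x s)) ≤ β) →
        ∑ t ∈ Finset.Icc 1 T,
          ((A t (fun s => x (s.val + 1)) (fun s => fhat (s.val + 1))).sum
            fun g p => p * D (g (x t)) (fstar (x t)))
          ≤ 3 * C * ((N : ℝ) + β * T / N) + 2 * C * N * Real.log (F.card) :=
  oracle_efficient_via_delayed_ol_general Z D C hC hD0 hD1 hDsymm hDtri F hF hFZ T N hN β hβ
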